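/- arXiv:2510.26619 — 2 statements merged into one kernel-verified Lean document; each statement's English description precedes it below -/
import Mathlib

section
/- In a 4-Legendrian rack (in Kimura's sense, with cusp maps u_l, u_r, d_l, d_r), one has d_l = u_r⁻¹ ∘ π⁻¹ and d_r = u_l⁻¹ ∘ π⁻¹, where π is the kink map. -/
theorem rightInverse_self_op_of_leftInverse {X : Type*} (op : X → X → X) {g : X → X}
    (hg_left : ∀ x y, g (op x y) = op (g x) y) (hg_right : ∀ x y, op x (g y) = op x y)
    (hg : Function.LeftInverse g fun x => op x x) :
    Function.RightInverse g fun x => op x x := fun x =>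
  calc op (g x) (g x) = op (g x) x := hg_right _ _
    _ = g (op x x) := (hg_left x x).symm
    _ = x := hg x

theorem kimura_downs_determined_general {X : Type*} (op : X → X → X)
    (ul ur dl dr : X → X)
    (h_eq2 : ∀ x, ur (dl x) = dr (ul x))
    (h_eq3 : ∀ x, dr (ul x) = ul (dr x))
    (h_kink : ∀ x, dr (ul (op x x)) = x)
    (h_ul : ∀ x y, ul (op x y) = op (ul x) y)
    (h_ur : ∀ x y, ur (op x y) = op (ur x) y)
    (h_dl : ∀ x y, dl (op x y) = op (dl x) y)
    (h_dr : ∀ x y, dr (op x y) = op (dr x) y)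
    (h_ul' : ∀ x y, op x (ul y) = op x y)
    (h_ur' : ∀ x y, op x (ur y) = op x y)
    (h_dl' : ∀ x y, op x (dl y) = op x y)
    (h_dr' : ∀ x y, op x (dr y) = op x y) :
    (∀ x, ur (dl (op x x)) = x) ∧
    (∀ x, op (ur (dl x)) (ur (dl x)) = x) ∧
    (∀ x, ul (dr (op x x)) = x) ∧
    (∀ x, op (ul (dr x)) (ul (dr x)) = x) := by
  have h_urdl : ∀ x, ur (dl (op x x)) = x := fun x => (h_eq2 _).trans (h_kink x)
  have h_uldr : ∀ x, ul (dr (op x x)) = x := fun x => (h_eq3 _).symm.trans (h_kink x)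
  refine ⟨h_urdl, ?_, h_uldr, ?_⟩
  · exact rightInverse_self_op_of_leftInverse op (g := ur ∘ dl)
      (fun x y => by simp only [Function.comp_apply, h_dl, h_ur])
      (fun x y => by simp only [Function.comp_apply, h_ur', h_dl']) h_urdl
  · exact rightInverse_self_op_of_leftInverse op (g := ul ∘ dr)
      (fun x y => by simp only [Function.comp_apply, h_dr, h_ul])
      (fun x y => by simp only [Function.comp_apply, h_ul', h_dr']) h_uldr

/-- In a 4-Legendrian rack in Kimura's sense, `d_l = u_r⁻¹ ∘ π⁻¹` and
`d_r = u_l⁻¹ ∘ π⁻¹`; equivalently, `u_r ∘ d_l` and `u_l ∘ d_r` are two-sided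
inverses of the kink map `π x = x ▷ x`. -/
theorem kimura_downs_determined {X : Type*} (op inv : X → X → X)
    (h_left : ∀ x y, inv (op x y) y = x)
    (h_right : ∀ x y, op (inv x y) y = x)
    (h_dist : ∀ x y z, op (op x y) z = op (op x z) (op y z))
    (ul ur dl dr : X → X)
    (h_eq1 : ∀ x, dl (ur x) = ur (dl x))
    (h_eq2 : ∀ x, ur (dl x) = dr (ul x))
    (h_eq3 : ∀ x, dr (ul x) = ul (dr x))
    (h_kink : ∀ x, dr (ul (op x x)) = x)
    (h_ul : ∀ x y, ul (op x y) = op (ul x) y)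
    (h_ur : ∀ x y, ur (op x y) = op (ur x) y)
    (h_dl : ∀ x y, dl (op x y) = op (dl x) y)
    (h_dr : ∀ x y, dr (op x y) = op (dr x) y)
    (h_ul' : ∀ x y, op x (ul y) = op x y)
    (h_ur' : ∀ x y, op x (ur y) = op x y)
    (h_dl' : ∀ x y, op x (dl y) = op x y)
    (h_dr' : ∀ x y, op x (dr y) = op x y) :
    (∀ x, ur (dl (op x x)) = x) ∧
    (∀ x, op (ur (dl x)) (ur (dl x)) = x) ∧
    (∀ x, ul (dr (op x x)) = x) ∧
    (∀ x, op (ul (dr x)) (ul (dr x)) = x) :=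
  kimura_downs_determined_general op ul ur dl dr h_eq2 h_eq3 h_kink h_ul h_ur h_dl h_dr h_ul' h_ur'
    h_dl' h_dr'
end

section
/- Let X_σ be a permutation rack with a 4-Legendrian structure (u_l, u_r), and set d_l := u_r⁻¹σ⁻¹, d_r := u_l⁻¹σ⁻¹. Let W be any composition of U maps from {u_l, u_r} and D maps from {d_l, d_r} which alternates between the sets {u_l, d_l} and {u_r, d_r}, where D ≥ U ≥ 1 and D − U = 2r with r ≥ 0. Then W ∘ σ^w equals, for some choice, (d_l d_r)^r ∘ σ^{w−U} or (d_r d_l)^r ∘ σ^{w−U}, for every integer w. In particular, since u_l, u_r, d_l, d_r each commute with σ, W ∘ σ^w depends only on (U, D, w) and on whether the leftmost factor of W lies in {u_l, d_l} or {u_r, d_r}. -/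
/-- Letters for cusp maps: `(isUp, isLeft)`. `(true, true) ↦ u_l`,
`(true, false) ↦ u_r`, `(false, true) ↦ d_l`, `(false, false) ↦ d_r`. -/
def cuspInterp {X : Type*} (ul ur dl dr : Equiv.Perm X) :
    Bool × Bool → Equiv.Perm X
  | (true, true) => ul
  | (true, false) => ur
  | (false, true) => dl
  | (false, false) => dr

/-!
Every letter commutes with `σ`, and an up letter next to a down letter multiplies to `σ⁻¹`
(alternation puts them on opposite sides: `u_l d_r = d_r u_l = u_r d_l = d_l u_r = σ⁻¹`).
As long as the word contains an up letter it also contains such an adjacent up/down pair;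
cancelling it to `σ⁻¹`, which moves to the right end, leaves a shorter alternating word.
After `U` cancellations only an alternating word of `2r` down letters is left, which is
`(d_l d_r)^r` or `(d_r d_l)^r`.
-/

namespace List

variable {α : Type*}

theorem exists_append_cons_cons_ne_of_mem {β : Type*} (g : α → β) {L : List α} {x y : α}
    (hx : x ∈ L) (hy : y ∈ L) (hxy : g x ≠ g y) :
    ∃ L₁ L₂ a b, L = L₁ ++ a :: b :: L₂ ∧ g a ≠ g b := by
  by_contra! h
  have hL : L ≠ [] := ne_nil_of_mem hx
  have hconst : ∀ z ∈ L, g z = g (L.head hL) :=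
    IsChain.induction (r := fun a b => g a = g b) _ L
      (isChain_iff_forall_rel_of_append_cons_cons.mpr fun a b L₁ L₂ he => h L₁ L₂ a b he)
      (fun _ _ hab h => hab ▸ h) (fun _ => rfl)
  exact hxy ((hconst x hx).trans (hconst y hy).symm)

theorem IsChain.append_of_append_cons_cons {g : α → Bool} {L₁ L₂ : List α} {a b : α}
    (h : (L₁ ++ a :: b :: L₂).IsChain fun p q => g p ≠ g q) :
    (L₁ ++ L₂).IsChain fun p q => g p ≠ g q := by
  obtain ⟨h₁, h₂, hxa⟩ := isChain_append.mp h
  obtain ⟨hab, hb⟩ := isChain_cons_cons.mp h₂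
  refine isChain_append.mpr ⟨h₁, hb.tail, fun x hx y hy => ?_⟩
  have hxa := hxa x hx a rfl
  have hby := (List.isChain_cons.mp hb).1 y hy
  -- over `Bool`, three consecutive changes of value amount to one
  revert hxa hab hby
  cases g x <;> cases g a <;> cases g b <;> cases g y <;> decide

theorem countP_append_cons_cons (P : α → Bool) (L₁ L₂ : List α) (a b : α) :
    (L₁ ++ a :: b :: L₂).countP P = (L₁ ++ L₂).countP P + [a, b].countP P := by
  simp only [countP_append, countP_cons, countP_nil]
  omega

end List

section AlternatingWord

variable {G : Type*} [Group G] (f : Bool × Bool → G)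

theorem prod_map_eq_pow_of_forall_fst_eq_false (b : Bool) :
    ∀ (r : ℕ) (L : List (Bool × Bool)), (∀ p ∈ L, p.1 = false) →
      L.IsChain (fun p q => p.2 ≠ q.2) → L.length = 2 * r → (∀ p ∈ L.head?, p.2 = b) →
      (L.map f).prod = (f (false, b) * f (false, !b)) ^ r := by
  intro r
  induction r with
  | zero => intro L _ _ hlen _; simp_all
  | succ r ih =>
    rintro (_ | ⟨⟨p₁, p₂⟩, _ | ⟨⟨q₁, q₂⟩, t⟩⟩) hdown halt hlen hhead
    · simp at hlen
    · simp at hlen; omega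
    obtain rfl : p₁ = false := hdown (p₁, p₂) (by simp)
    obtain rfl : q₁ = false := hdown (q₁, q₂) (by simp)
    have hp₂ : p₂ = b := hhead _ rfl
    subst p₂
    obtain ⟨hpq, hqt⟩ := List.isChain_cons_cons.mp halt
    obtain rfl : q₂ = !b := Bool.eq_not.mpr hpq.symm
    have ht : (t.map f).prod = (f (false, b) * f (false, !b)) ^ r :=
      ih t (fun p hp => hdown p (by simp [hp])) hqt.tail (by simp at hlen; omega)
        fun p hp => Bool.not_eq_not.mp ((List.isChain_cons.mp hqt).1 p hp).symm
    simp [ht, pow_succ', mul_assoc]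

variable {f} {s : G}

theorem prod_map_append_cons_cons (hcomm : ∀ p, Commute s (f p)) {L₁ L₂ : List (Bool × Bool)}
    {a b : Bool × Bool} (hab : f a * f b = s) :
    ((L₁ ++ a :: b :: L₂).map f).prod = ((L₁ ++ L₂).map f).prod * s := by
  have hs : Commute s (L₂.map f).prod :=
    Commute.list_prod_right _ _ fun x hx => by
      obtain ⟨p, -, rfl⟩ := List.mem_map.mp hx
      exact hcomm p
  simp only [List.map_append, List.map_cons, List.prod_append, List.prod_cons]
  rw [← mul_assoc (f a), hab, hs.eq, mul_assoc]

theorem exists_prod_map_eq_of_isChain (hcomm : ∀ p, Commute s (f p))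
    (hpair : ∀ a b : Bool × Bool, a.1 ≠ b.1 → a.2 ≠ b.2 → f a * f b = s) (r : ℕ) :
    ∀ (U : ℕ) (L : List (Bool × Bool)), L.countP (fun p => p.1) = U →
      L.countP (fun p => !p.1) = U + 2 * r → L.IsChain (fun p q => p.2 ≠ q.2) →
      ∃ b, (L.map f).prod = (f (false, b) * f (false, !b)) ^ r * s ^ U := by
  intro U
  induction U with
  | zero =>
    intro L hup hdown halt
    have hfst : ∀ p ∈ L, p.1 = false := fun p hp => by
      simpa using List.countP_eq_zero.mp hup p hp
    have hlen : L.length = 2 * r := by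
      have hall : L.countP (fun p => !p.1) = L.length :=
        List.countP_eq_length.mpr fun p hp => by simp [hfst p hp]
      rw [← hall, hdown, zero_add]
    cases L with
    | nil => exact ⟨true, by simp_all⟩
    | cons p t =>
      refine ⟨p.2, ?_⟩
      rw [pow_zero, mul_one]
      exact prod_map_eq_pow_of_forall_fst_eq_false f p.2 r _ hfst halt hlen (by simp)
  | succ U ih =>
    intro L hup hdown halt
    obtain ⟨x, hx, hx1⟩ := List.countP_pos_iff.mp (show 0 < L.countP (·.1) by omega)
    obtain ⟨y, hy, hy1⟩ := List.countP_pos_iff.mp (show 0 < L.countP (!·.1) by omega)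
    obtain ⟨L₁, L₂, a, b, rfl, hab⟩ :=
      List.exists_append_cons_cons_ne_of_mem Prod.fst hx hy (by simpa [hx1] using hy1)
    have hab₂ : a.2 ≠ b.2 := List.isChain_iff_forall_rel_of_append_cons_cons.mp halt rfl
    have hab_up : [a, b].countP (fun p => p.1) = 1 := by
      simp only [List.countP_cons, List.countP_nil]
      revert hab; cases a.1 <;> cases b.1 <;> simp
    have hab_down : [a, b].countP (fun p => !p.1) = 1 := by
      simp only [List.countP_cons, List.countP_nil]
      revert hab; cases a.1 <;> cases b.1 <;> simp
    rw [List.countP_append_cons_cons, hab_up] at hup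
    rw [List.countP_append_cons_cons, hab_down] at hdown
    obtain ⟨c, hc⟩ := ih (L₁ ++ L₂) (by omega) (by omega) halt.append_of_append_cons_cons
    refine ⟨c, ?_⟩
    rw [prod_map_append_cons_cons hcomm (hpair a b hab hab₂), hc, mul_assoc, ← pow_succ]

end AlternatingWord

section PermutationRack

variable {X : Type*} {σ ul ur : Equiv.Perm X}

theorem commute_cuspInterp (hul : Commute ul σ) (hur : Commute ur σ) (p : Bool × Bool) :
    Commute σ (cuspInterp ul ur (ur⁻¹ * σ⁻¹) (ul⁻¹ * σ⁻¹) p) := by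
  have hσ : Commute σ σ⁻¹ := (Commute.refl σ).inv_right
  rcases p with ⟨_ | _, _ | _⟩
  exacts [hul.symm.inv_right.mul_right hσ, hur.symm.inv_right.mul_right hσ, hur.symm, hul.symm]

theorem cuspInterp_mul_cuspInterp (hul : Commute ul σ) (hur : Commute ur σ)
    {a b : Bool × Bool} (h₁ : a.1 ≠ b.1) (h₂ : a.2 ≠ b.2) :
    cuspInterp ul ur (ur⁻¹ * σ⁻¹) (ul⁻¹ * σ⁻¹) a *
      cuspInterp ul ur (ur⁻¹ * σ⁻¹) (ul⁻¹ * σ⁻¹) b = σ⁻¹ := by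
  have hl : σ⁻¹ * ul = ul * σ⁻¹ := hul.inv_right.eq.symm
  have hr : σ⁻¹ * ur = ur * σ⁻¹ := hur.inv_right.eq.symm
  rcases a with ⟨_ | _, _ | _⟩ <;> rcases b with ⟨_ | _, _ | _⟩ <;>
    simp only [ne_eq, not_true] at h₁ h₂ <;>
    simp [cuspInterp, mul_assoc, hl, hr]

end PermutationRack

theorem perm_rack_word_reduction_general {X : Type*} (σ ul ur : Equiv.Perm X)
    (hul : ul * σ = σ * ul) (hur : ur * σ = σ * ur)
    (dl dr : Equiv.Perm X)
    (hdl : dl = ur⁻¹ * σ⁻¹) (hdr : dr = ul⁻¹ * σ⁻¹)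
    (U D r : ℕ) (hD : D = U + 2 * r)
    (L : List (Bool × Bool))
    (hcountU : L.countP (fun p => p.1) = U)
    (hcountD : L.countP (fun p => !p.1) = D)
    (halt : L.Chain' (fun a b => a.2 ≠ b.2)) :
    ∀ w : ℤ,
      (L.map (cuspInterp ul ur dl dr)).prod * σ ^ w
          = (dl * dr) ^ r * σ ^ (w - (U : ℤ)) ∨
      (L.map (cuspInterp ul ur dl dr)).prod * σ ^ w
          = (dr * dl) ^ r * σ ^ (w - (U : ℤ)) := by
  subst hdl hdr hD
  intro w
  obtain ⟨b, hb⟩ := exists_prod_map_eq_of_isChain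
    (fun p => (commute_cuspInterp hul hur p).inv_left)
    (fun _ _ => cuspInterp_mul_cuspInterp hul hur) r U L hcountU hcountD halt
  have hσ : σ⁻¹ ^ U * σ ^ w = σ ^ (w - U) := by
    rw [← zpow_natCast, inv_zpow', ← zpow_add, neg_add_eq_sub]
  rw [hb, mul_assoc, hσ]
  cases b
  exacts [Or.inr rfl, Or.inl rfl]

/-- Let `X_σ` be a permutation rack with 4-Legendrian structure `(u_l, u_r)`,
`d_l := u_r⁻¹σ⁻¹`, `d_r := u_l⁻¹σ⁻¹`. If `W` is a composition of `U ≥ 1` maps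
from `{u_l, u_r}` and `D = U + 2r` maps from `{d_l, d_r}`, alternating between
the left set `{u_l, d_l}` and the right set `{u_r, d_r}`, then for every
integer `w`, `W ∘ σ^w` equals `(d_l d_r)^r ∘ σ^{w-U}` or
`(d_r d_l)^r ∘ σ^{w-U}`. -/
theorem perm_rack_word_reduction {X : Type*} (σ ul ur : Equiv.Perm X)
    (hul : ul * σ = σ * ul) (hur : ur * σ = σ * ur)
    (dl dr : Equiv.Perm X)
    (hdl : dl = ur⁻¹ * σ⁻¹) (hdr : dr = ul⁻¹ * σ⁻¹)
    (U D r : ℕ) (hU : 1 ≤ U) (hD : D = U + 2 * r)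
    (L : List (Bool × Bool))
    (hcountU : L.countP (fun p => p.1) = U)
    (hcountD : L.countP (fun p => !p.1) = D)
    (halt : L.Chain' (fun a b => a.2 ≠ b.2)) :
    ∀ w : ℤ,
      (L.map (cuspInterp ul ur dl dr)).prod * σ ^ w
          = (dl * dr) ^ r * σ ^ (w - (U : ℤ)) ∨
      (L.map (cuspInterp ul ur dl dr)).prod * σ ^ w
          = (dr * dl) ^ r * σ ^ (w - (U : ℤ)) :=
  perm_rack_word_reduction_general σ ul ur hul hur dl dr hdl hdr U D r hD L hcountU hcountD halt
end
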